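/- Let M, N, P, Q be matroids with finite ground sets S, T, U, V respectively, with S disjoint from T and U disjoint from V, and suppose the free products M □ N and P □ Q are equal (in particular S ∪ T = U ∪ V) with |S| = |U|. Then rk(M) = rk(P). -/

import Mathlib

open Set Matroid

/-- The rank of a set `X` in a matroid `M`: the maximum cardinality of an
independent subset of `X`.  For `X = M.E` this is the rank of `M`. -/
noncomputable def mrk {α : Type*} (M : Matroid α) (X : Set α) : ℕ :=
  sSup (Set.ncard '' {I | M.Indep I ∧ I ⊆ X})

/-!
The restriction of `M □ N` to `S` is `M`, so `rk(M) = rk_L(S)` for `L = M □ N = P □ Q`; by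
symmetry it suffices to show `rk(P) ≤ rk_L(A)` for every `A ⊆ U ∪ V` with `|A| = |U|`.
Take a largest `P`-independent `I ⊆ A ∩ U` and add to it any
`min(rk(P) - |I|, |A \ U|)` elements of `A \ U`: their nullity in `Q` is at most their number,
hence at most the rank-lack of `I`, so the union is `L`-independent. Its size is at least
`rk(P)`, because `|A \ U| = |U \ A|` and `rk(P) ≤ rk_P(A ∩ U) + |U \ A|`.
-/

section mrk

variable {α : Type*} {M : Matroid α} {I X : Set α}

lemma finite_ncard_image_indep_subset (hX : X.Finite) :
    (ncard '' {I | M.Indep I ∧ I ⊆ X}).Finite :=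
  (hX.finite_subsets.subset fun _ hI => hI.2).image _

lemma ncard_le_mrk (hX : X.Finite) (hI : M.Indep I) (hIX : I ⊆ X) : I.ncard ≤ mrk M X :=
  le_csSup (finite_ncard_image_indep_subset hX).bddAbove ⟨I, ⟨hI, hIX⟩, rfl⟩

lemma exists_indep_subset_ncard_eq_mrk (hX : X.Finite) :
    ∃ I, M.Indep I ∧ I ⊆ X ∧ I.ncard = mrk M X := by
  have hne : (ncard '' {I | M.Indep I ∧ I ⊆ X}).Nonempty :=
    ⟨_, ∅, ⟨M.empty_indep, empty_subset X⟩, rfl⟩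
  obtain ⟨I, ⟨hI, hIX⟩, hIcard⟩ := hne.csSup_mem (finite_ncard_image_indep_subset hX)
  exact ⟨I, hI, hIX, hIcard⟩

lemma Matroid.Indep.mrk_eq_ncard (hI : M.Indep I) (hIfin : I.Finite) : mrk M I = I.ncard := by
  obtain ⟨J, -, hJI, hJcard⟩ := exists_indep_subset_ncard_eq_mrk (M := M) hIfin
  have := ncard_le_ncard hJI hIfin
  have := ncard_le_mrk hIfin hI subset_rfl
  omega

lemma mrk_le_mrk_inter_add_ncard_sdiff (hX : X.Finite) (A : Set α) :
    mrk M X ≤ mrk M (X ∩ A) + (X \ A).ncard := by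
  obtain ⟨I, hI, hIX, hIcard⟩ := exists_indep_subset_ncard_eq_mrk (M := M) hX
  have hsplit := ncard_inter_add_ncard_sdiff_eq_ncard I A (hX.subset hIX)
  have hinter : (I ∩ A).ncard ≤ mrk M (X ∩ A) :=
    ncard_le_mrk (hX.inter_of_left A) (hI.subset inter_subset_left)
      (inter_subset_inter_left A hIX)
  have hsdiff : (I \ A).ncard ≤ (X \ A).ncard :=
    ncard_le_ncard (sdiff_subset_sdiff_left hIX) hX.sdiff
  omega

end mrk

/-- `L = M □ N` on `S ∪ T`, described by its independent sets. -/
def IsFreeProduct {α : Type*} (L M N : Matroid α) (S T : Set α) : Prop :=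
  ∀ A : Set α, L.Indep A ↔ A ⊆ S ∪ T ∧ M.Indep (A ∩ S) ∧
    (A ∩ T).ncard - mrk N (A ∩ T) ≤ mrk M S - mrk M (A ∩ S)

namespace IsFreeProduct

variable {α : Type*} {L M N : Matroid α} {S T A I X Y : Set α}

lemma indep_iff_of_subset_left (hL : IsFreeProduct L M N S T) (hST : Disjoint S T)
    (hX : X ⊆ S) : L.Indep X ↔ M.Indep X := by
  simp [hL X, inter_eq_left.mpr hX, (hST.mono_left hX).inter_eq, hX.trans subset_union_left]

lemma mrk_eq_of_subset_left (hL : IsFreeProduct L M N S T) (hST : Disjoint S T)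
    (hX : X ⊆ S) : mrk L X = mrk M X := by
  have : {I | L.Indep I ∧ I ⊆ X} = {I | M.Indep I ∧ I ⊆ X} := by
    ext I
    exact and_congr_left fun hIX => hL.indep_iff_of_subset_left hST (hIX.trans hX)
  simp only [mrk, this]

lemma indep_union (hL : IsFreeProduct L M N S T) (hST : Disjoint S T) (hS : S.Finite)
    (hI : M.Indep I) (hIS : I ⊆ S) (hYT : Y ⊆ T) (hY : Y.ncard ≤ mrk M S - I.ncard) :
    L.Indep (I ∪ Y) := by
  have hBS : (I ∪ Y) ∩ S = I := by
    rw [union_inter_distrib_right, inter_eq_left.mpr hIS, (hST.symm.mono_left hYT).inter_eq,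
      union_empty]
  have hBT : (I ∪ Y) ∩ T = Y := by
    rw [union_inter_distrib_right, inter_eq_left.mpr hYT, (hST.mono_left hIS).inter_eq,
      empty_union]
  rw [hL, hBS, hBT, hI.mrk_eq_ncard (hS.subset hIS)]
  exact ⟨union_subset_union hIS hYT, hI, le_trans (Nat.sub_le _ _) hY⟩

lemma mrk_le_mrk_of_ncard_eq (hL : IsFreeProduct L M N S T) (hST : Disjoint S T)
    (hS : S.Finite) (hA : A.Finite) (hAST : A ⊆ S ∪ T) (hcard : A.ncard = S.ncard) :
    mrk M S ≤ mrk L A := by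
  obtain ⟨I, hI, hIA, hIcard⟩ := exists_indep_subset_ncard_eq_mrk (M := M) (hS.inter_of_left A)
  obtain ⟨Y, hYA, hYcard⟩ :=
    exists_subset_card_eq (min_le_right (mrk M S - I.ncard) (A \ S).ncard)
  have hYT : Y ⊆ T := fun y hy => (hAST (hYA hy).1).resolve_left (hYA hy).2
  have hB : L.Indep (I ∪ Y) :=
    hL.indep_union hST hS hI (hIA.trans inter_subset_left) hYT (hYcard ▸ min_le_left _ _)
  have hBA : I ∪ Y ⊆ A := union_subset (hIA.trans inter_subset_right) (hYA.trans sdiff_subset)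
  have hBcard : (I ∪ Y).ncard = I.ncard + Y.ncard :=
    ncard_union_eq (hST.mono (hIA.trans inter_subset_left) hYT) (hA.subset (hIA.trans
      inter_subset_right)) (hA.subset (hYA.trans sdiff_subset))
  have hsdiff : (A \ S).ncard = (S \ A).ncard :=
    (ncard_eq_ncard_iff_ncard_sdiff_eq_ncard_sdiff hA hS).mp hcard
  have := ncard_le_mrk hA hB hBA
  have := mrk_le_mrk_inter_add_ncard_sdiff (M := M) hS A
  omega

end IsFreeProduct

theorem stmt_13_general {α : Type*} (M N P Q : Matroid α) (S T U V : Set α)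
    (hS : S.Finite) (hU : U.Finite)
    (hST : Disjoint S T) (hUV : Disjoint U V)
    (L : Matroid α)
    (hLE : L.E = S ∪ T)
    (hLI : ∀ A : Set α, L.Indep A ↔ A ⊆ S ∪ T ∧ M.Indep (A ∩ S) ∧
      (A ∩ T).ncard - mrk N (A ∩ T) ≤ mrk M S - mrk M (A ∩ S))
    (hLE' : L.E = U ∪ V)
    (hLI' : ∀ A : Set α, L.Indep A ↔ A ⊆ U ∪ V ∧ P.Indep (A ∩ U) ∧
      (A ∩ V).ncard - mrk Q (A ∩ V) ≤ mrk P U - mrk P (A ∩ U))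
    (hcard : S.ncard = U.ncard) :
    mrk M S = mrk P U := by
  have hL : IsFreeProduct L M N S T := hLI
  have hL' : IsFreeProduct L P Q U V := hLI'
  have hground : S ∪ T = U ∪ V := hLE.symm.trans hLE'
  apply le_antisymm
  · calc mrk M S ≤ mrk L U :=
          hL.mrk_le_mrk_of_ncard_eq hST hS hU (hground ▸ subset_union_left) hcard.symm
      _ = mrk P U := hL'.mrk_eq_of_subset_left hUV subset_rfl
  · calc mrk P U ≤ mrk L S :=
          hL'.mrk_le_mrk_of_ncard_eq hUV hU hS (hground ▸ subset_union_left) hcard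
      _ = mrk M S := hL.mrk_eq_of_subset_left hST subset_rfl

/-- If the free products `M □ N` and `P □ Q` are equal (to a matroid `L`), where the
ground sets `S` of `M` and `U` of `P` have the same size, then `rk(M) = rk(P)`. -/
theorem stmt_13 {α : Type*} (M N P Q : Matroid α) (S T U V : Set α)
    (hS : S.Finite) (hT : T.Finite) (hU : U.Finite) (hV : V.Finite)
    (hMS : M.E = S) (hNT : N.E = T) (hPU : P.E = U) (hQV : Q.E = V)
    (hST : Disjoint S T) (hUV : Disjoint U V)
    (L : Matroid α)
    (hLE : L.E = S ∪ T)
    (hLI : ∀ A : Set α, L.Indep A ↔ A ⊆ S ∪ T ∧ M.Indep (A ∩ S) ∧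
      (A ∩ T).ncard - mrk N (A ∩ T) ≤ mrk M S - mrk M (A ∩ S))
    (hLE' : L.E = U ∪ V)
    (hLI' : ∀ A : Set α, L.Indep A ↔ A ⊆ U ∪ V ∧ P.Indep (A ∩ U) ∧
      (A ∩ V).ncard - mrk Q (A ∩ V) ≤ mrk P U - mrk P (A ∩ U))
    (hcard : S.ncard = U.ncard) :
    mrk M S = mrk P U :=
  stmt_13_general M N P Q S T U V hS hU hST hUV L hLE hLI hLE' hLI' hcard
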